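/- Let H be a commutative Hopf algebra over a commutative ring R with a Poisson Hopf algebra structure p, and define a ◁ b := p(a, b₍₁₎)·S(b₍₂₎). Then for all a, b, c ∈ H: (a ◁ b) ◁ c − (a ◁ c) ◁ b = a ◁ p(b, c). -/

import Mathlib

open TensorProduct LinearMap

/-- A Poisson Hopf algebra structure on a commutative Hopf algebra `H` over `R`:
an `R`-bilinear bracket `p` which is a biderivation, antisymmetric, satisfies the
Jacobi identity, and is compatible with the comultiplication
(`Δ(p(a,b)) = p(a₁,b₁) ⊗ a₂b₂ + a₁b₁ ⊗ p(a₂,b₂)`). -/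
structure PoissonHopfStr (R H : Type*) [CommRing R] [CommRing H] [HopfAlgebra R H] where
  p : H →ₗ[R] H →ₗ[R] H
  leibniz_left : ∀ a b c : H, p (a * b) c = a * p b c + p a c * b
  leibniz_right : ∀ a b c : H, p a (b * c) = p a b * c + b * p a c
  antisymm : ∀ a b : H, p a b + p b a = 0
  jacobi : ∀ a b c : H, p a (p b c) = p (p a b) c + p b (p a c)
  compat : (Coalgebra.comul (R := R) (A := H)) ∘ₗ TensorProduct.lift p =
    (TensorProduct.map (TensorProduct.lift p) (LinearMap.mul' R H)
      + TensorProduct.map (LinearMap.mul' R H) (TensorProduct.lift p)) ∘ₗ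
      (TensorProduct.tensorTensorTensorComm R H H H H).toLinearMap ∘ₗ
      TensorProduct.map (Coalgebra.comul (R := R)) (Coalgebra.comul (R := R))

namespace PoissonHopfAux

open Coalgebra HopfAlgebra

variable {R H : Type*} [CommRing R] [CommRing H] [HopfAlgebra R H]
variable {ι ι' κ Λ : Type*}

lemma sum_counit_smul_right' {x : H} (r : Repr R x ι) :
    ∑ i ∈ r.index, counit (R := R) (r.left i) • r.right i = x := by
  have h := congrArg (TensorProduct.lid R H) (sum_counit_tmul_eq r)
  rw [map_sum] at h
  simp only [lid_tmul] at h
  simpa using h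

lemma sum_counit_smul_left' {x : H} (r : Repr R x ι) :
    ∑ i ∈ r.index, counit (R := R) (r.right i) • r.left i = x := by
  have h := congrArg (TensorProduct.rid R H) (sum_tmul_counit_eq r)
  rw [map_sum] at h
  simp only [rid_tmul] at h
  simpa using h

noncomputable def reprMul {u v : H} (ru : Repr R u ι) (rv : Repr R v ι') : Repr R (u * v) (ι × ι') where
  index := ru.index ×ˢ rv.index
  left := fun ij => ru.left ij.1 * rv.left ij.2
  right := fun ij => ru.right ij.1 * rv.right ij.2
  eq := by
    rw [Bialgebra.comul_mul, ← ru.eq, ← rv.eq, Finset.sum_mul_sum, Finset.sum_product]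
    simp [Algebra.TensorProduct.tmul_mul_tmul]

lemma sum_mul3_eq (f g h : H →ₗ[R] H) {x : H} (rx : Repr R x ι)
    (rx1 : ∀ i, Repr R (rx.left i) κ) (rx2 : ∀ i, Repr R (rx.right i) Λ) :
    ∑ i ∈ rx.index, ∑ j ∈ (rx1 i).index,
      f ((rx1 i).left j) * (g ((rx1 i).right j) * h (rx.right i))
    = ∑ i ∈ rx.index, ∑ j ∈ (rx2 i).index,
      f (rx.left i) * (g ((rx2 i).left j) * h ((rx2 i).right j)) := by
  have key := sum_map_tmul_tmul_eq (R := R) f g h x (repr := rx) (a₁ := rx1) (a₂ := rx2)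
  have h2 := congrArg (LinearMap.mul' R H ∘ₗ (LinearMap.mul' R H).lTensor H) key
  simp only [map_sum, coe_comp, Function.comp_apply, lTensor_tmul, mul'_apply] at h2
  exact h2.symm

lemma sum_G1 {x : H} (rx : Repr R x ι) (rx2 : ∀ i, Repr R (rx.right i) κ) :
    ∑ i ∈ rx.index, ∑ j ∈ (rx2 i).index,
      (antipode (R := R) (rx.left i) * (rx2 i).left j) ⊗ₜ[R] (rx2 i).right j
    = (1 : H) ⊗ₜ[R] x := by
  set rx1 : ∀ i, Repr R (rx.left i) (H × H) := fun i => ℛ R (rx.left i) with hrx1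
  have key := sum_map_tmul_tmul_eq (R := R) (antipode (R := R) (A := H))
    (LinearMap.id (R := R) (M := H)) (LinearMap.id (R := R) (M := H)) x
    (repr := rx) (a₁ := rx1) (a₂ := rx2)
  have h2 := congrArg ((LinearMap.mul' R H).rTensor H ∘ₗ
    (TensorProduct.assoc R H H H).symm.toLinearMap) key
  simp only [map_sum, coe_comp, Function.comp_apply, LinearEquiv.coe_coe,
    assoc_symm_tmul, rTensor_tmul, mul'_apply, id_coe, id_eq] at h2
  rw [h2]
  have hcol : ∀ i ∈ rx.index, ∑ j ∈ (rx1 i).index,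
      (antipode (R := R) ((rx1 i).left j) * (rx1 i).right j) ⊗ₜ[R] rx.right i
      = counit (R := R) (rx.left i) • ((1 : H) ⊗ₜ[R] rx.right i) := by
    intro i _
    rw [← sum_tmul, sum_antipode_mul_eq_algebraMap_counit (rx1 i), Algebra.algebraMap_eq_smul_one, smul_tmul']
  rw [Finset.sum_congr rfl hcol]
  have h3 : ∑ i ∈ rx.index, counit (R := R) (rx.left i) • ((1 : H) ⊗ₜ[R] rx.right i)
      = (1 : H) ⊗ₜ[R] ∑ i ∈ rx.index, counit (R := R) (rx.left i) • rx.right i := by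
    rw [tmul_sum]
    exact Finset.sum_congr rfl fun i _ => by rw [tmul_smul]
  rw [h3, sum_counit_smul_right']

lemma antipode_mul' (u v : H) :
    antipode (R := R) (u * v) = antipode (R := R) u * antipode (R := R) (A := H) v := by
  set ru := ℛ R u with hru
  set rv := ℛ R v with hrv
  set ru2 : ∀ i, Repr R (ru.right i) (H × H) := fun i => ℛ R (ru.right i) with hru2
  set rv2 : ∀ j, Repr R (rv.right j) (H × H) := fun j => ℛ R (rv.right j) with hrv2
  set M3 : H := ∑ i ∈ ru.index, ∑ j ∈ rv.index, ∑ i' ∈ (ru2 i).index, ∑ j' ∈ (rv2 j).index,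
      antipode (R := R) (ru.left i) * antipode (R := R) (rv.left j) *
        (((ru2 i).left i' * (rv2 j).left j') *
          antipode (R := R) ((ru2 i).right i' * (rv2 j).right j')) with hM3
  have wayA : M3 = antipode (R := R) u * antipode (R := R) (A := H) v := by
    rw [hM3]
    have hinner : ∀ i ∈ ru.index, ∀ j ∈ rv.index,
        ∑ i' ∈ (ru2 i).index, ∑ j' ∈ (rv2 j).index,
          antipode (R := R) (ru.left i) * antipode (R := R) (rv.left j) *
            (((ru2 i).left i' * (rv2 j).left j') *
              antipode (R := R) ((ru2 i).right i' * (rv2 j).right j'))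
        = (counit (R := R) (ru.right i) • antipode (R := R) (ru.left i)) *
            (counit (R := R) (rv.right j) • antipode (R := R) (rv.left j)) := by
      intro i _ j _
      simp only [← Finset.mul_sum]
      have : ∑ i' ∈ (ru2 i).index, ∑ j' ∈ (rv2 j).index,
          ((ru2 i).left i' * (rv2 j).left j') *
            antipode (R := R) ((ru2 i).right i' * (rv2 j).right j')
          = algebraMap R H (counit (R := R) (ru.right i * rv.right j)) := by
        rw [← Finset.sum_product', ← sum_mul_antipode_eq_algebraMap_counit (reprMul (ru2 i) (rv2 j))]
        rfl
      rw [this, Bialgebra.counit_mul, Algebra.smul_def, Algebra.smul_def, map_mul]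
      ring
    rw [Finset.sum_congr rfl (fun i hi => Finset.sum_congr rfl (hinner i hi)),
      ← Finset.sum_mul_sum]
    have hSu : ∑ i ∈ ru.index, counit (R := R) (ru.right i) • antipode (R := R) (ru.left i)
        = antipode (R := R) (A := H) u := by
      have h := congrArg (antipode (R := R) (A := H)) (sum_counit_smul_left' ru)
      rw [map_sum] at h
      simpa only [map_smul] using h
    have hSv : ∑ j ∈ rv.index, counit (R := R) (rv.right j) • antipode (R := R) (rv.left j)
        = antipode (R := R) (A := H) v := by
      have h := congrArg (antipode (R := R) (A := H)) (sum_counit_smul_left' rv)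
      rw [map_sum] at h
      simpa only [map_smul] using h
    rw [hSu, hSv]
  have wayB : M3 = antipode (R := R) (u * v) := by
    rw [hM3, Finset.sum_congr rfl (fun i (_ : i ∈ ru.index) => Finset.sum_comm)]
    have hinner : ∀ i ∈ ru.index, ∀ i' ∈ (ru2 i).index,
        ∑ j ∈ rv.index, ∑ j' ∈ (rv2 j).index,
          antipode (R := R) (ru.left i) * antipode (R := R) (rv.left j) *
            (((ru2 i).left i' * (rv2 j).left j') *
              antipode (R := R) ((ru2 i).right i' * (rv2 j).right j'))
        = (antipode (R := R) (ru.left i) * (ru2 i).left i') *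
            ((1 : H) * antipode (R := R) ((ru2 i).right i' * v)) := by
      intro i _ i' _
      set φ : H ⊗[R] H →ₗ[R] H :=
        mulLeft R (antipode (R := R) (ru.left i) * (ru2 i).left i') ∘ₗ mul' R H ∘ₗ
          map (LinearMap.id (R := R) (M := H))
            (antipode (R := R) ∘ₗ mulLeft R ((ru2 i).right i')) with hφ
      have hterm : ∀ j ∈ rv.index, ∀ j' ∈ (rv2 j).index,
          antipode (R := R) (ru.left i) * antipode (R := R) (rv.left j) *
            (((ru2 i).left i' * (rv2 j).left j') *
              antipode (R := R) ((ru2 i).right i' * (rv2 j).right j'))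
          = φ ((antipode (R := R) (rv.left j) * (rv2 j).left j') ⊗ₜ[R] (rv2 j).right j') := by
        intro j _ j' _
        simp only [hφ, coe_comp, Function.comp_apply, map_tmul, id_coe, id_eq,
          mul'_apply, mulLeft_apply]
        ring
      rw [Finset.sum_congr rfl (fun j hj => Finset.sum_congr rfl (hterm j hj))]
      simp only [← map_sum]
      rw [sum_G1 rv rv2]
      simp only [hφ, coe_comp, Function.comp_apply, map_tmul, id_coe, id_eq,
        mul'_apply, mulLeft_apply]
    rw [Finset.sum_congr rfl (fun i hi => Finset.sum_congr rfl (hinner i hi))]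
    set ψ : H ⊗[R] H →ₗ[R] H :=
      mul' R H ∘ₗ map (LinearMap.id (R := R) (M := H))
        (mulLeft R (1 : H) ∘ₗ antipode (R := R) ∘ₗ mulRight R v) with hψ
    have hterm2 : ∀ i ∈ ru.index, ∀ i' ∈ (ru2 i).index,
        (antipode (R := R) (ru.left i) * (ru2 i).left i') *
          ((1 : H) * antipode (R := R) ((ru2 i).right i' * v))
        = ψ ((antipode (R := R) (ru.left i) * (ru2 i).left i') ⊗ₜ[R] (ru2 i).right i') := by
      intro i _ i' _
      simp only [hψ, coe_comp, Function.comp_apply, map_tmul, id_coe, id_eq,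
        mul'_apply, mulLeft_apply, mulRight_apply]
    rw [Finset.sum_congr rfl (fun i hi => Finset.sum_congr rfl (hterm2 i hi))]
    simp only [← map_sum]
    rw [sum_G1 ru ru2]
    simp only [hψ, coe_comp, Function.comp_apply, map_tmul, id_coe, id_eq,
      mul'_apply, mulLeft_apply, mulRight_apply, one_mul]
  rw [← wayB, wayA]

variable (P : PoissonHopfStr R H)

lemma comul_p {x y : H} (rx : Repr R x ι) (ry : Repr R y ι') :
    comul (R := R) (P.p x y)
      = (∑ i ∈ rx.index, ∑ j ∈ ry.index,
          P.p (rx.left i) (ry.left j) ⊗ₜ[R] (rx.right i * ry.right j))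
        + ∑ i ∈ rx.index, ∑ j ∈ ry.index,
          (rx.left i * ry.left j) ⊗ₜ[R] P.p (rx.right i) (ry.right j) := by
  have h := LinearMap.congr_fun P.compat (x ⊗ₜ[R] y)
  simp only [coe_comp, Function.comp_apply, lift.tmul, map_tmul, LinearEquiv.coe_coe] at h
  rw [← rx.eq, ← ry.eq] at h
  simp only [sum_tmul, tmul_sum, map_sum, tensorTensorTensorComm_tmul, LinearMap.add_apply,
    map_tmul, lift.tmul, mul'_apply, Finset.sum_add_distrib] at h
  rw [h]
  congr 1 <;> exact Finset.sum_comm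

noncomputable def reprP {x y : H} (rx : Repr R x ι) (ry : Repr R y ι') : Repr R (P.p x y) ((ι × ι') ⊕ (ι × ι')) where
  index := (rx.index ×ˢ ry.index).disjSum (rx.index ×ˢ ry.index)
  left := Sum.elim (fun ij => P.p (rx.left ij.1) (ry.left ij.2))
    (fun ij => rx.left ij.1 * ry.left ij.2)
  right := Sum.elim (fun ij => rx.right ij.1 * ry.right ij.2)
    (fun ij => P.p (rx.right ij.1) (ry.right ij.2))
  eq := by
    rw [Finset.sum_disjSum, comul_p P rx ry]
    simp [Finset.sum_product]

lemma p_one (y : H) : P.p 1 y = 0 := by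
  have h := P.leibniz_left 1 1 y
  simp only [one_mul, mul_one] at h
  exact (left_eq_add.mp h)

lemma p_expand_left {x : H} (w : H) (rx : Repr R x ι) :
    P.p x w = ∑ i ∈ rx.index, counit (R := R) (rx.left i) • P.p (rx.right i) w := by
  conv_lhs => rw [← sum_counit_smul_right' rx]
  simp only [map_sum, map_smul, LinearMap.sum_apply, LinearMap.smul_apply]

lemma p_expand_both {x y : H} (rx : Repr R x ι) (ry : Repr R y ι') :
    P.p x y = ∑ i ∈ rx.index, ∑ j ∈ ry.index,
      (counit (R := R) (rx.right i) * counit (R := R) (ry.right j)) •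
        P.p (rx.left i) (ry.left j) := by
  conv_lhs => rw [← sum_counit_smul_left' rx, ← sum_counit_smul_left' ry]
  simp only [map_sum, map_smul, LinearMap.sum_apply, LinearMap.smul_apply, Finset.smul_sum,
    smul_smul]
  rw [Finset.sum_comm]
  exact Finset.sum_congr rfl fun i _ => Finset.sum_congr rfl fun j _ => by rw [mul_comm]

lemma p_expand_both' {x y : H} (rx : Repr R x ι) (ry : Repr R y ι') :
    P.p x y = ∑ i ∈ rx.index, ∑ j ∈ ry.index,
      (counit (R := R) (rx.left i) * counit (R := R) (ry.left j)) •
        P.p (rx.right i) (ry.right j) := by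
  conv_lhs => rw [← sum_counit_smul_right' rx, ← sum_counit_smul_right' ry]
  simp only [map_sum, map_smul, LinearMap.sum_apply, LinearMap.smul_apply, Finset.smul_sum,
    smul_smul]
  rw [Finset.sum_comm]
  exact Finset.sum_congr rfl fun i _ => Finset.sum_congr rfl fun j _ => by rw [mul_comm]

lemma counit_p (x y : H) : counit (R := R) (P.p x y) = 0 := by
  set rx := ℛ R x with hrx
  set ry := ℛ R y with hry
  have h := sum_counit_smul_left' (reprP P rx ry)
  simp only [reprP] at h
  rw [Finset.sum_disjSum] at h
  simp only [Sum.elim_inl, Sum.elim_inr] at h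
  have h1 : ∑ ij ∈ rx.index ×ˢ ry.index,
      counit (R := R) (rx.right ij.1 * ry.right ij.2) • P.p (rx.left ij.1) (ry.left ij.2)
      = P.p x y := by
    rw [p_expand_both P rx ry, Finset.sum_product]
    exact Finset.sum_congr rfl fun i _ => Finset.sum_congr rfl fun j _ => by
      rw [Bialgebra.counit_mul]
  rw [h1] at h
  have h2 : ∑ ij ∈ rx.index ×ˢ ry.index,
      counit (R := R) (P.p (rx.right ij.1) (ry.right ij.2)) • (rx.left ij.1 * ry.left ij.2)
      = 0 := by
    linear_combination h
  have h3 := congrArg (counit (R := R) (A := H)) h2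
  rw [map_sum, map_zero] at h3
  simp only [map_smul, Bialgebra.counit_mul, smul_eq_mul] at h3
  rw [Finset.sum_product] at h3
  rw [p_expand_both' P rx ry]
  rw [map_sum]
  simp only [map_sum, map_smul, smul_eq_mul]
  rw [← h3]
  exact Finset.sum_congr rfl fun i _ => Finset.sum_congr rfl fun j _ => by ring

lemma counit_smul_eq {z : H} (w : H) (rz : Repr R z ι) :
    counit (R := R) z • w
      = ∑ j ∈ rz.index, antipode (R := R) (rz.left j) * (rz.right j * w) := by
  rw [Algebra.smul_def, ← sum_antipode_mul_eq_algebraMap_counit rz, Finset.sum_mul]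
  exact Finset.sum_congr rfl fun j _ => by ring

lemma star2 (y : H) {z : H} (rz : Repr R z ι) :
    ∑ i ∈ rz.index, rz.left i * P.p (antipode (R := R) (rz.right i)) y
    = - ∑ i ∈ rz.index, P.p (rz.left i) y * antipode (R := R) (rz.right i) := by
  have h0 : P.p (algebraMap R H (counit (R := R) z)) y = 0 := by
    rw [Algebra.algebraMap_eq_smul_one, map_smul, LinearMap.smul_apply, p_one, smul_zero]
  rw [← sum_mul_antipode_eq_algebraMap_counit rz, map_sum, LinearMap.sum_apply] at h0
  have h1 : ∀ i ∈ rz.index, P.p (rz.left i * antipode (R := R) (rz.right i)) y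
      = rz.left i * P.p (antipode (R := R) (rz.right i)) y
        + P.p (rz.left i) y * antipode (R := R) (rz.right i) :=
    fun i _ => P.leibniz_left _ _ _
  rw [Finset.sum_congr rfl h1, Finset.sum_add_distrib] at h0
  linear_combination h0

lemma L3 {x y : H} (rx : Repr R x ι) (ry : Repr R y ι') :
    ∑ i ∈ rx.index, ∑ j ∈ ry.index,
      (rx.left i * ry.left j) * antipode (R := R) (P.p (rx.right i) (ry.right j))
    = - ∑ i ∈ rx.index, ∑ j ∈ ry.index,
        P.p (rx.left i) (ry.left j) *
          (antipode (R := R) (rx.right i) * antipode (R := R) (ry.right j)) := by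
  have h := sum_mul_antipode_eq_algebraMap_counit (reprP P rx ry)
  rw [counit_p, map_zero] at h
  simp only [reprP] at h
  rw [Finset.sum_disjSum] at h
  simp only [Sum.elim_inl, Sum.elim_inr] at h
  rw [Finset.sum_product, Finset.sum_product] at h
  have h2 : ∀ i ∈ rx.index, ∀ j ∈ ry.index,
      P.p (rx.left i) (ry.left j) * antipode (R := R) (rx.right i * ry.right j)
      = P.p (rx.left i) (ry.left j) *
          (antipode (R := R) (rx.right i) * antipode (R := R) (ry.right j)) := by
    intro i _ j _
    rw [antipode_mul']
  rw [Finset.sum_congr rfl (fun i hi => Finset.sum_congr rfl (h2 i hi))] at h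
  linear_combination h

lemma L5 {x : H} (y : H) (rx : Repr R x ι) (rx2 : ∀ i, Repr R (rx.right i) κ) :
    P.p (antipode (R := R) x) y
    = - ∑ i ∈ rx.index, ∑ j ∈ (rx2 i).index,
        antipode (R := R) (rx.left i) *
          (P.p ((rx2 i).left j) y * antipode (R := R) ((rx2 i).right j)) := by
  set rx1 : ∀ i, Repr R (rx.left i) (H × H) := fun i => ℛ R (rx.left i) with hrx1
  have e1 : P.p (antipode (R := R) x) y
      = ∑ i ∈ rx.index, counit (R := R) (rx.left i) •
          P.p (antipode (R := R) (rx.right i)) y := by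
    conv_lhs => rw [← sum_counit_smul_right' rx]
    rw [map_sum, map_sum, LinearMap.sum_apply]
    exact Finset.sum_congr rfl fun i _ => by rw [map_smul, map_smul, LinearMap.smul_apply]
  have e2 : ∀ i ∈ rx.index, counit (R := R) (rx.left i) •
        P.p (antipode (R := R) (rx.right i)) y
      = ∑ j ∈ (rx1 i).index, antipode (R := R) ((rx1 i).left j) *
          ((rx1 i).right j * P.p (antipode (R := R) (rx.right i)) y) :=
    fun i _ => counit_smul_eq _ (rx1 i)
  rw [e1, Finset.sum_congr rfl e2]
  have key := sum_mul3_eq (antipode (R := R)) (LinearMap.id (R := R) (M := H))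
    ((P.p.flip y) ∘ₗ antipode (R := R)) rx rx1 rx2
  simp only [coe_comp, Function.comp_apply, flip_apply, id_coe, id_eq] at key
  rw [key]
  have e3 : ∀ i ∈ rx.index, ∑ j ∈ (rx2 i).index,
      antipode (R := R) (rx.left i) *
        ((rx2 i).left j * P.p (antipode (R := R) ((rx2 i).right j)) y)
      = antipode (R := R) (rx.left i) *
          (- ∑ j ∈ (rx2 i).index, P.p ((rx2 i).left j) y *
            antipode (R := R) ((rx2 i).right j)) := by
    intro i _
    rw [← Finset.mul_sum, star2 P y (rx2 i)]
  rw [Finset.sum_congr rfl e3]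
  simp only [mul_neg, Finset.mul_sum, Finset.sum_neg_distrib]

lemma Klemma (x : H) {cc : H} (rc : Repr R cc ι) :
    ∑ j ∈ rc.index, P.p (antipode (R := R) x) (rc.left j) * antipode (R := R) (rc.right j)
    = ∑ j ∈ rc.index, rc.left j * antipode (R := R) (P.p x (rc.right j)) := by
  set rx := ℛ R x with hrx
  set rx1 : ∀ i, Repr R (rx.left i) (H × H) := fun i => ℛ R (rx.left i) with hrx1
  set rx2 : ∀ i, Repr R (rx.right i) (H × H) := fun i => ℛ R (rx.right i) with hrx2
  set M : H := ∑ i ∈ rx.index, antipode (R := R) (rx.left i) *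
      (∑ j' ∈ (rx2 i).index, ∑ j ∈ rc.index,
        P.p ((rx2 i).left j') (rc.left j) *
          (antipode (R := R) ((rx2 i).right j') * antipode (R := R) (rc.right j))) with hM
  have hMexp : M = ∑ i ∈ rx.index, ∑ j' ∈ (rx2 i).index, ∑ j ∈ rc.index,
      antipode (R := R) (rx.left i) * (P.p ((rx2 i).left j') (rc.left j) *
        (antipode (R := R) ((rx2 i).right j') * antipode (R := R) (rc.right j))) := by
    rw [hM]
    refine Finset.sum_congr rfl fun i _ => ?_
    rw [Finset.mul_sum]
    refine Finset.sum_congr rfl fun j' _ => ?_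
    rw [Finset.mul_sum]
  have hLHS : ∑ j ∈ rc.index,
      P.p (antipode (R := R) x) (rc.left j) * antipode (R := R) (rc.right j) = - M := by
    have e1 : ∀ j ∈ rc.index,
        P.p (antipode (R := R) x) (rc.left j) * antipode (R := R) (rc.right j)
        = - ∑ i ∈ rx.index, ∑ j' ∈ (rx2 i).index,
            antipode (R := R) (rx.left i) *
              (P.p ((rx2 i).left j') (rc.left j) *
                (antipode (R := R) ((rx2 i).right j') * antipode (R := R) (rc.right j))) := by
      intro j _
      rw [L5 P (rc.left j) rx rx2, neg_mul, Finset.sum_mul]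
      congr 1
      exact Finset.sum_congr rfl fun i _ => by
        rw [Finset.sum_mul]
        exact Finset.sum_congr rfl fun j' _ => by ring
    rw [Finset.sum_congr rfl e1, Finset.sum_neg_distrib, hMexp, neg_inj]
    rw [Finset.sum_comm]
    exact Finset.sum_congr rfl fun i _ => Finset.sum_comm
  have hRHS : ∑ j ∈ rc.index, rc.left j * antipode (R := R) (P.p x (rc.right j)) = - M := by
    have e1 : ∀ j ∈ rc.index, rc.left j * antipode (R := R) (P.p x (rc.right j))
        = ∑ i ∈ rx.index, counit (R := R) (rx.left i) •
            (rc.left j * antipode (R := R) (P.p (rx.right i) (rc.right j))) := by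
      intro j _
      rw [p_expand_left P (rc.right j) rx, map_sum, Finset.mul_sum]
      exact Finset.sum_congr rfl fun i _ => by rw [map_smul, mul_smul_comm]
    rw [Finset.sum_congr rfl e1]
    have e2 : ∀ j ∈ rc.index, ∀ i ∈ rx.index,
        counit (R := R) (rx.left i) •
          (rc.left j * antipode (R := R) (P.p (rx.right i) (rc.right j)))
        = ∑ j'' ∈ (rx1 i).index, antipode (R := R) ((rx1 i).left j'') *
            ((rx1 i).right j'' *
              (rc.left j * antipode (R := R) (P.p (rx.right i) (rc.right j)))) :=
      fun j _ i _ => counit_smul_eq _ (rx1 i)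
    rw [Finset.sum_congr rfl (fun j hj => Finset.sum_congr rfl (e2 j hj))]
    have e3 : ∀ j ∈ rc.index,
        ∑ i ∈ rx.index, ∑ j'' ∈ (rx1 i).index, antipode (R := R) ((rx1 i).left j'') *
            ((rx1 i).right j'' *
              (rc.left j * antipode (R := R) (P.p (rx.right i) (rc.right j))))
        = ∑ i ∈ rx.index, ∑ j' ∈ (rx2 i).index, antipode (R := R) (rx.left i) *
            ((rx2 i).left j' *
              (rc.left j * antipode (R := R) (P.p ((rx2 i).right j') (rc.right j)))) := by
      intro j _
      have key := sum_mul3_eq (antipode (R := R)) (LinearMap.id (R := R) (M := H))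
        (mulLeft R (rc.left j) ∘ₗ antipode (R := R) ∘ₗ (P.p.flip (rc.right j))) rx rx1 rx2
      simp only [coe_comp, Function.comp_apply, flip_apply, id_coe, id_eq,
        mulLeft_apply] at key
      exact key
    rw [Finset.sum_congr rfl e3, Finset.sum_comm]
    rw [Finset.sum_congr rfl (fun i (_ : i ∈ rx.index) => Finset.sum_comm)]
    have e4 : ∀ i ∈ rx.index,
        ∑ j' ∈ (rx2 i).index, ∑ j ∈ rc.index, antipode (R := R) (rx.left i) *
            ((rx2 i).left j' *
              (rc.left j * antipode (R := R) (P.p ((rx2 i).right j') (rc.right j))))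
        = antipode (R := R) (rx.left i) *
            (- ∑ j' ∈ (rx2 i).index, ∑ j ∈ rc.index,
              P.p ((rx2 i).left j') (rc.left j) *
                (antipode (R := R) ((rx2 i).right j') * antipode (R := R) (rc.right j))) := by
      intro i _
      have hassoc : ∑ j' ∈ (rx2 i).index, ∑ j ∈ rc.index, antipode (R := R) (rx.left i) *
            ((rx2 i).left j' *
              (rc.left j * antipode (R := R) (P.p ((rx2 i).right j') (rc.right j))))
          = antipode (R := R) (rx.left i) *
              ∑ j' ∈ (rx2 i).index, ∑ j ∈ rc.index,
                ((rx2 i).left j' * rc.left j) *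
                  antipode (R := R) (P.p ((rx2 i).right j') (rc.right j)) := by
        rw [Finset.mul_sum]
        refine Finset.sum_congr rfl fun j' _ => ?_
        rw [Finset.mul_sum]
        exact Finset.sum_congr rfl fun j _ => by ring
      rw [hassoc, L3 P (rx2 i) rc]
    rw [Finset.sum_congr rfl e4, hM]
    simp only [mul_neg, Finset.sum_neg_distrib]
  rw [hLHS, hRHS]

end PoissonHopfAux

namespace PoissonHopfStr

variable {R H : Type*} [CommRing R] [CommRing H] [HopfAlgebra R H]

/-- The operation `a ◁ b := p(a, b₍₁₎) · S(b₍₂₎)`, as a linear map `H ⊗ H →ₗ H`. -/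
noncomputable def tri (P : PoissonHopfStr R H) : H ⊗[R] H →ₗ[R] H :=
  LinearMap.mul' R H ∘ₗ
    TensorProduct.map (TensorProduct.lift P.p) (HopfAlgebra.antipode (R := R)) ∘ₗ
    (TensorProduct.assoc R H H H).symm.toLinearMap ∘ₗ
    LinearMap.lTensor H (Coalgebra.comul (R := R))

/-- The map `r(a ⊗ b) = −(a ◁ b₍₁₎) ⊗ b₍₂₎`. -/
noncomputable def rmap (P : PoissonHopfStr R H) : H ⊗[R] H →ₗ[R] H ⊗[R] H :=
  - (LinearMap.rTensor H P.tri ∘ₗ (TensorProduct.assoc R H H H).symm.toLinearMap ∘ₗ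
      LinearMap.lTensor H (Coalgebra.comul (R := R)))

/-- `τ := r + σ ∘ r ∘ σ`. -/
noncomputable def tau (P : PoissonHopfStr R H) : H ⊗[R] H →ₗ[R] H ⊗[R] H :=
  P.rmap + (TensorProduct.comm R H H).toLinearMap ∘ₗ P.rmap ∘ₗ
    (TensorProduct.comm R H H).toLinearMap


end PoissonHopfStr

namespace PoissonHopfAux

open Coalgebra HopfAlgebra

variable {R H : Type*} [CommRing R] [CommRing H] [HopfAlgebra R H] (P : PoissonHopfStr R H)
variable {ι ι' κ Λ : Type*}

lemma tri_repr (a : H) {b : H} (rb : Repr R b ι) :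
    P.tri (a ⊗ₜ[R] b)
      = ∑ i ∈ rb.index, P.p a (rb.left i) * antipode (R := R) (rb.right i) := by
  rw [PoissonHopfStr.tri]
  simp only [coe_comp, Function.comp_apply, lTensor_tmul]
  rw [← rb.eq]
  simp only [tmul_sum, map_sum, LinearEquiv.coe_coe, assoc_symm_tmul, map_tmul,
    lift.tmul, mul'_apply]

end PoissonHopfAux


open PoissonHopfAux Coalgebra HopfAlgebra in
/-- STATEMENT 12: for the operation `a ◁ b := p(a, b₍₁₎)·S(b₍₂₎)` one has
`(a ◁ b) ◁ c − (a ◁ c) ◁ b = a ◁ p(b, c)`. -/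
theorem triangle_action {R H : Type*} [CommRing R] [CommRing H] [HopfAlgebra R H]
    (P : PoissonHopfStr R H) (a b c : H) :
    P.tri (P.tri (a ⊗ₜ[R] b) ⊗ₜ[R] c) - P.tri (P.tri (a ⊗ₜ[R] c) ⊗ₜ[R] b)
      = P.tri (a ⊗ₜ[R] P.p b c) := by
  classical
  set rb := ℛ R b with hrb
  set rc := ℛ R c with hrc
  set SA : H := ∑ i ∈ rb.index, ∑ j ∈ rc.index,
    P.p (P.p a (rb.left i)) (rc.left j) *
      (antipode (R := R) (rb.right i) * antipode (R := R) (rc.right j)) with hSA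
  set SB : H := ∑ i ∈ rb.index, ∑ j ∈ rc.index,
    P.p a (rb.left i) *
      (P.p (antipode (R := R) (rb.right i)) (rc.left j) *
        antipode (R := R) (rc.right j)) with hSB
  set SC : H := ∑ i ∈ rb.index, ∑ j ∈ rc.index,
    P.p (P.p a (rc.left j)) (rb.left i) *
      (antipode (R := R) (rb.right i) * antipode (R := R) (rc.right j)) with hSC
  set SD : H := ∑ i ∈ rb.index, ∑ j ∈ rc.index,
    P.p a (rc.left j) *
      (P.p (antipode (R := R) (rc.right j)) (rb.left i) *
        antipode (R := R) (rb.right i)) with hSD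
  set SE : H := ∑ i ∈ rb.index, ∑ j ∈ rc.index,
    P.p (rb.left i) (P.p a (rc.left j)) *
      (antipode (R := R) (rb.right i) * antipode (R := R) (rc.right j)) with hSE
  set SF : H := ∑ i ∈ rb.index, ∑ j ∈ rc.index,
    P.p a (rb.left i) *
      (rc.left j * antipode (R := R) (P.p (rb.right i) (rc.right j))) with hSF
  set SG : H := ∑ i ∈ rb.index, ∑ j ∈ rc.index,
    rb.left i * (P.p a (rc.left j) *
      antipode (R := R) (P.p (rb.right i) (rc.right j))) with hSG
  have hL1 : P.tri (P.tri (a ⊗ₜ[R] b) ⊗ₜ[R] c) = SB + SA := by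
    rw [tri_repr P (P.tri (a ⊗ₜ[R] b)) rc, tri_repr P a rb]
    have e : ∀ j ∈ rc.index,
        P.p (∑ i ∈ rb.index, P.p a (rb.left i) * antipode (R := R) (rb.right i))
            (rc.left j) * antipode (R := R) (rc.right j)
        = ∑ i ∈ rb.index,
            (P.p a (rb.left i) *
              (P.p (antipode (R := R) (rb.right i)) (rc.left j) *
                antipode (R := R) (rc.right j))
            + P.p (P.p a (rb.left i)) (rc.left j) *
                (antipode (R := R) (rb.right i) * antipode (R := R) (rc.right j))) := by
      intro j _
      rw [map_sum, LinearMap.sum_apply, Finset.sum_mul]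
      refine Finset.sum_congr rfl fun i _ => ?_
      rw [P.leibniz_left]
      ring
    rw [Finset.sum_congr rfl e]
    rw [Finset.sum_comm]
    simp only [Finset.sum_add_distrib]
    rfl
  have hL2 : P.tri (P.tri (a ⊗ₜ[R] c) ⊗ₜ[R] b) = SD + SC := by
    rw [tri_repr P (P.tri (a ⊗ₜ[R] c)) rb, tri_repr P a rc]
    have e : ∀ i ∈ rb.index,
        P.p (∑ j ∈ rc.index, P.p a (rc.left j) * antipode (R := R) (rc.right j))
            (rb.left i) * antipode (R := R) (rb.right i)
        = ∑ j ∈ rc.index,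
            (P.p a (rc.left j) *
              (P.p (antipode (R := R) (rc.right j)) (rb.left i) *
                antipode (R := R) (rb.right i))
            + P.p (P.p a (rc.left j)) (rb.left i) *
                (antipode (R := R) (rb.right i) * antipode (R := R) (rc.right j))) := by
      intro i _
      rw [map_sum, LinearMap.sum_apply, Finset.sum_mul]
      refine Finset.sum_congr rfl fun j _ => ?_
      rw [P.leibniz_left]
      ring
    rw [Finset.sum_congr rfl e]
    simp only [Finset.sum_add_distrib]
    rfl
  have hR : P.tri (a ⊗ₜ[R] P.p b c) = (SA + SE) + (SF + SG) := by
    rw [tri_repr P a (reprP P rb rc)]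
    simp only [reprP]
    rw [Finset.sum_disjSum]
    simp only [Sum.elim_inl, Sum.elim_inr]
    rw [Finset.sum_product, Finset.sum_product]
    have e1 : ∀ i ∈ rb.index, ∀ j ∈ rc.index,
        P.p a (P.p (rb.left i) (rc.left j)) *
          antipode (R := R) (rb.right i * rc.right j)
        = P.p (P.p a (rb.left i)) (rc.left j) *
            (antipode (R := R) (rb.right i) * antipode (R := R) (rc.right j))
          + P.p (rb.left i) (P.p a (rc.left j)) *
            (antipode (R := R) (rb.right i) * antipode (R := R) (rc.right j)) := by
      intro i _ j _
      rw [antipode_mul', P.jacobi]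
      ring
    have e2 : ∀ i ∈ rb.index, ∀ j ∈ rc.index,
        P.p a (rb.left i * rc.left j) *
          antipode (R := R) (P.p (rb.right i) (rc.right j))
        = P.p a (rb.left i) *
            (rc.left j * antipode (R := R) (P.p (rb.right i) (rc.right j)))
          + rb.left i * (P.p a (rc.left j) *
              antipode (R := R) (P.p (rb.right i) (rc.right j))) := by
      intro i _ j _
      rw [P.leibniz_right]
      ring
    rw [Finset.sum_congr rfl (fun i hi => Finset.sum_congr rfl (e1 i hi)),
      Finset.sum_congr rfl (fun i hi => Finset.sum_congr rfl (e2 i hi))]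
    simp only [Finset.sum_add_distrib]
    rfl
  have hBF : SB = SF := by
    rw [hSB, hSF]
    refine Finset.sum_congr rfl fun i _ => ?_
    rw [← Finset.mul_sum, ← Finset.mul_sum, Klemma P (rb.right i) rc]
  have hCE : SC = - SE := by
    rw [hSC, hSE, ← Finset.sum_neg_distrib]
    refine Finset.sum_congr rfl fun i _ => ?_
    rw [← Finset.sum_neg_distrib]
    refine Finset.sum_congr rfl fun j _ => ?_
    have := eq_neg_of_add_eq_zero_left (P.antisymm (P.p a (rc.left j)) (rb.left i))
    rw [this]
    ring
  have hDG : SD = - SG := by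
    rw [hSD, hSG, Finset.sum_comm]
    have e : ∀ j ∈ rc.index,
        ∑ i ∈ rb.index, P.p a (rc.left j) *
          (P.p (antipode (R := R) (rc.right j)) (rb.left i) * antipode (R := R) (rb.right i))
        = - ∑ i ∈ rb.index, rb.left i * (P.p a (rc.left j) *
            antipode (R := R) (P.p (rb.right i) (rc.right j))) := by
      intro j _
      have hK := Klemma P (rc.right j) rb
      have h1 : ∑ i ∈ rb.index, P.p a (rc.left j) *
          (P.p (antipode (R := R) (rc.right j)) (rb.left i) * antipode (R := R) (rb.right i))
          = P.p a (rc.left j) * ∑ i ∈ rb.index,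
              rb.left i * antipode (R := R) (P.p (rc.right j) (rb.right i)) := by
        rw [← hK, Finset.mul_sum]
      rw [h1, Finset.mul_sum, ← Finset.sum_neg_distrib]
      refine Finset.sum_congr rfl fun i _ => ?_
      have ha := eq_neg_of_add_eq_zero_left (P.antisymm (rc.right j) (rb.right i))
      rw [ha, map_neg]
      ring
    rw [Finset.sum_congr rfl e, Finset.sum_neg_distrib]
    congr 1
    exact Finset.sum_comm
  rw [hL1, hL2, hR]
  linear_combination hBF - hCE - hDG
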